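/- For every integer K ≥ 7 and every positive integer N: 2·(1 + H(3;N,K)·2^{−K} + (1/3)·H(5;N,K)·4^{−K}) ≥ 2.7895. -/

import Mathlib

/-!
Since `2` is a primitive root modulo `3` and `5`, `ν ↦ 2 ^ ν` is a bijection from `[1, p - 1]`
onto the nonzero residues mod `p`, so `H(p;N,K) = C_K(N)`, the number of `K`-tuples of nonzero
residues with sum `N`. Splitting off the first coordinate gives
`C_{K+1}(r) = ∑_{s ≠ 0} C_K(r - s) = (p - 1) ^ K - C_K(r)`, whence by induction
`p C_K(r) = (p - 1) ^ K + (-1) ^ K (p [r = 0] - 1) ≥ (p - 1) ^ K - (p - 1)`.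
For `K ≥ 7` this gives `H(3;N,K) / 2 ^ K ≥ (1 - 2 / 2 ^ 7) / 3` and
`H(5;N,K) / 4 ^ K ≥ (1 - 4 / 4 ^ 7) / 5`, which suffice.
-/

/-- `H(d;N,K)` is the number of tuples `(ν₁,…,ν_K)` with `1 ≤ νᵢ ≤ ε(d)` (where `ε(d)` is the
multiplicative order of `2` mod `d`) and `d ∣ N - ∑ 2^{νᵢ}`. -/
noncomputable def Hcount (d N K : ℕ) : ℕ :=
  Nat.card {ν : Fin K → ℕ //
    (∀ i, 1 ≤ ν i ∧ ν i ≤ orderOf (2 : ZMod d)) ∧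
    (d : ℤ) ∣ ((N : ℤ) - ∑ i, 2 ^ ν i)}

open Finset

section TupleSumCount

variable {α G : Type*} [AddCommGroup G] [DecidableEq G] (A : Finset α) (g : α → G)

def tupleSumCount (K : ℕ) (r : G) : ℕ :=
  #{ν ∈ Fintype.piFinset fun _ : Fin K => A | ∑ i, g (ν i) = r}

theorem tupleSumCount_zero (r : G) : tupleSumCount A g 0 r = if r = 0 then 1 else 0 := by
  simp [tupleSumCount, eq_comm, apply_ite]

theorem sum_tupleSumCount [Fintype G] (K : ℕ) : ∑ r, tupleSumCount A g K r = #A ^ K := by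
  rw [← Fintype.card_piFinset_const A K]
  exact (card_eq_sum_card_fiberwise fun _ _ => mem_univ _).symm

theorem card_eq_card_add_one_of_bijOn [Fintype G] {A : Finset α} {g : α → G}
    (hg : Set.BijOn g A {0}ᶜ) : Fintype.card G = #A + 1 := by
  have hg' : Set.BijOn g A (univ.erase (0 : G) : Finset G) := by
    simpa [Set.compl_eq_univ_sdiff] using hg
  rw [hg'.finsetCard_eq g, card_erase_add_one (mem_univ 0), card_univ]

variable [DecidableEq α]

theorem tupleSumCount_succ (K : ℕ) (r : G) :
    tupleSumCount A g (K + 1) r = ∑ a ∈ A, tupleSumCount A g K (r - g a) := by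
  rw [tupleSumCount, card_eq_sum_card_fiberwise (f := fun ν => ν 0) (t := A)
    fun ν hν => Fintype.mem_piFinset.1 (mem_filter.1 hν).1 0]
  refine sum_congr rfl fun a ha => ?_
  apply card_nbij' Fin.tail (Fin.cons a)
  · intro ν hν
    simp only [mem_coe, mem_filter, Fintype.mem_piFinset, Fin.sum_univ_succ] at hν ⊢
    obtain ⟨⟨hmem, hsum⟩, rfl⟩ := hν
    exact ⟨fun i => hmem i.succ, eq_sub_of_add_eq' hsum⟩
  · intro τ hτ
    simp only [mem_coe, mem_filter, Fintype.mem_piFinset, Fin.sum_univ_succ] at hτ ⊢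
    refine ⟨⟨Fin.cases ha hτ.1, ?_⟩, rfl⟩
    simp [hτ.2]
  · intro ν hν
    simp only [mem_coe, mem_filter] at hν
    rw [← hν.2, Fin.cons_self_tail]
  · intro τ _
    exact Fin.tail_cons _ _

variable [Fintype G] {A g} (hg : Set.BijOn g A {0}ᶜ)
include hg

theorem tupleSumCount_succ_add_tupleSumCount (K : ℕ) (r : G) :
    tupleSumCount A g (K + 1) r + tupleSumCount A g K r = #A ^ K := by
  have hsum : ∑ a ∈ A, tupleSumCount A g K (r - g a) =
      ∑ s ∈ univ.erase 0, tupleSumCount A g K (r - s) :=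
    sum_nbij g (fun a ha => by simpa using hg.mapsTo ha) hg.injOn
      (fun s hs => by simpa using hg.surjOn (by simpa using hs)) fun _ _ => rfl
  rw [tupleSumCount_succ, hsum]
  nth_rw 2 [← sub_zero r]
  rw [sum_erase_add _ (f := fun s => tupleSumCount A g K (r - s)) (mem_univ 0),
    Fintype.sum_equiv (Equiv.subLeft r) (fun s => tupleSumCount A g K (r - s)) _ fun _ => rfl,
    sum_tupleSumCount]

theorem card_mul_tupleSumCount (K : ℕ) (r : G) :
    (Fintype.card G : ℤ) * tupleSumCount A g K r =
      #A ^ K + (-1) ^ K * ((if r = 0 then Fintype.card G else 0) - 1) := by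
  rw [card_eq_card_add_one_of_bijOn hg]
  induction K with
  | zero => rw [tupleSumCount_zero]; split_ifs <;> push_cast <;> ring
  | succ K ih =>
    have hrec : (tupleSumCount A g (K + 1) r : ℤ) = #A ^ K - tupleSumCount A g K r :=
      eq_sub_of_add_eq (mod_cast tupleSumCount_succ_add_tupleSumCount hg K r)
    rw [hrec]
    push_cast at ih ⊢
    linear_combination -ih

theorem card_pow_sub_card_le_card_mul_tupleSumCount (K : ℕ) (r : G) :
    (#A : ℤ) ^ K - #A ≤ Fintype.card G * tupleSumCount A g K r := by
  rw [card_mul_tupleSumCount hg, card_eq_card_add_one_of_bijOn hg]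
  rcases neg_one_pow_eq_or ℤ K with h | h <;> rw [h] <;> split_ifs with hr
  · push_cast; linarith
  · have hA : 0 < #A := by
      obtain ⟨a, ha, -⟩ := hg.surjOn (Set.mem_compl_singleton_iff.2 hr)
      exact card_pos.2 ⟨a, ha⟩
    push_cast; linarith
  · push_cast; linarith
  · push_cast; linarith

end TupleSumCount

theorem bijOn_pow_Icc_orderOf {M₀ : Type*} [GroupWithZero M₀] [Fintype M₀] {x : M₀}
    (hx : orderOf x = Fintype.card M₀ - 1) :
    Set.BijOn (x ^ ·) (Icc 1 (orderOf x) : Set ℕ) {0}ᶜ := by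
  classical
  have hcard : 1 < Fintype.card M₀ := Fintype.one_lt_card
  have hx0 : x ≠ 0 := by
    rintro rfl
    rw [orderOf_zero] at hx
    omega
  have hmaps : Set.MapsTo (x ^ ·) (Icc 1 (orderOf x) : Set ℕ) (univ.erase 0 : Finset M₀) :=
    fun n _ => by simpa using pow_ne_zero n hx0
  have hinj : Set.InjOn (x ^ ·) (Icc 1 (orderOf x) : Set ℕ) := by
    intro a ha b hb hab
    simp only [coe_Icc, Set.mem_Icc] at ha hb
    have hpred : x ^ (a - 1) = x ^ (b - 1) := by
      apply mul_left_cancel₀ hx0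
      rw [← pow_succ', ← pow_succ', Nat.sub_add_cancel ha.1, Nat.sub_add_cancel hb.1]
      exact hab
    have := pow_injOn_Iio_orderOf (x := x) (by simp; omega) (by simp; omega) hpred
    omega
  have hsurj := surjOn_of_injOn_of_card_le _ hmaps hinj (by simp [card_erase_of_mem, hx])
  have ht : ((univ.erase (0 : M₀) : Finset M₀) : Set M₀) = {0}ᶜ := by ext; simp
  rw [← ht]
  exact ⟨hmaps, hinj, hsurj⟩

theorem Hcount_eq_tupleSumCount (d N K : ℕ) :
    Hcount d N K = tupleSumCount (Icc 1 (orderOf (2 : ZMod d))) (2 ^ ·) K (N : ZMod d) := by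
  rw [Hcount, tupleSumCount, ← Nat.card_eq_finsetCard]
  refine Nat.card_congr (Equiv.subtypeEquivRight fun ν => ?_)
  rw [mem_filter, Fintype.mem_piFinset, ← ZMod.intCast_eq_intCast_iff_dvd_sub]
  simp only [mem_Icc, Int.cast_natCast, Int.cast_sum, Int.cast_pow, Int.cast_ofNat, eq_comm]

theorem orderOf_pow_sub_orderOf_le_mul_Hcount {p : ℕ} (hp : p.Prime)
    (h2 : orderOf (2 : ZMod p) = p - 1) (N K : ℕ) :
    (orderOf (2 : ZMod p) : ℝ) ^ K - orderOf (2 : ZMod p) ≤ p * Hcount p N K := by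
  have := Fact.mk hp
  have hbij := bijOn_pow_Icc_orderOf (x := (2 : ZMod p)) (by rwa [ZMod.card])
  have := card_pow_sub_card_le_card_mul_tupleSumCount hbij K (N : ZMod p)
  rw [Nat.card_Icc, Nat.add_sub_cancel, ZMod.card] at this
  rw [Hcount_eq_tupleSumCount]
  exact_mod_cast this

theorem orderOf_two_zmod_three : orderOf (2 : ZMod 3) = 2 := by
  rw [orderOf_eq_iff two_pos]; decide

theorem orderOf_two_zmod_five : orderOf (2 : ZMod 5) = 4 := by
  rw [orderOf_eq_iff four_pos]; decide

theorem Hcount_lower_bound (K : ℕ) (hK : 7 ≤ K) (N : ℕ) :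
    (2.7895 : ℝ) ≤ 2 * (1 + (Hcount 3 N K : ℝ) / 2 ^ K + (1 / 3) * (Hcount 5 N K : ℝ) / 4 ^ K) := by
  have h3 := orderOf_pow_sub_orderOf_le_mul_Hcount Nat.prime_three orderOf_two_zmod_three N K
  have h5 := orderOf_pow_sub_orderOf_le_mul_Hcount (by norm_num) orderOf_two_zmod_five N K
  rw [orderOf_two_zmod_three] at h3
  rw [orderOf_two_zmod_five] at h5
  push_cast at h3 h5
  have h2K : (2 : ℝ) ^ 7 ≤ 2 ^ K := pow_le_pow_right₀ one_le_two hK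
  have h4K : (4 : ℝ) ^ 7 ≤ 4 ^ K := pow_le_pow_right₀ (by norm_num) hK
  have hA : (0.328125 : ℝ) ≤ Hcount 3 N K / 2 ^ K := by
    rw [le_div_iff₀ (by positivity)]; linarith
  have hB : (0.19995 : ℝ) ≤ Hcount 5 N K / 4 ^ K := by
    rw [le_div_iff₀ (by positivity)]; linarith
  rw [mul_div_assoc]
  linarith
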